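/- Let Φ : ℝ^N → ℝ be sublinear, i.e., positively homogeneous (Φ(a x) = a Φ(x) for all a > 0) and subadditive (Φ(x + y) ≤ Φ(x) + Φ(y)), and measurable. Let μ be a Borel probability measure on ℝ^N such that u ↦ Φ(Θ + ηu) is μ-integrable for every Θ ∈ ℝ^N and η ≥ 0. Let 0 = η_0 ≤ η_1 ≤ ⋯ ≤ η_T be nondecreasing nonnegative reals and Θ_0, …, Θ_{T−1} ∈ ℝ^N arbitrary. Then Σ_{t=1}^T [ ∫ Φ(Θ_{t−1} + η_t u) dμ(u) − ∫ Φ(Θ_{t−1} + η_{t−1} u) dμ(u) ] ≤ η_T ∫ Φ(u) dμ(u). -/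

import Mathlib

open MeasureTheory

/-! Subadditivity and positive homogeneity give, pointwise,
`Φ(Θ + η' u) ≤ Φ(Θ + η u) + (η' - η) Φ(u)` for `η ≤ η'`; integrating against `μ`, each summand is
at most `(η_t - η_{t-1}) ∫ Φ dμ`, and these bounds telescope to `(η_T - η_0) ∫ Φ dμ`. -/

theorem Finset.sum_Icc_one_sub_pred {M : Type*} [AddCommGroup M] (g : ℕ → M) (T : ℕ) :
    ∑ t ∈ Finset.Icc 1 T, (g t - g (t - 1)) = g T - g 0 := by
  induction T with
  | zero => simp
  | succ n ih =>
    rw [Finset.sum_Icc_succ_top (by omega), ih, Nat.add_sub_cancel]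
    abel

theorem sublinear_add_smul_le {E : Type*} [AddCommGroup E] [Module ℝ E] {Φ : E → ℝ}
    (hhom : ∀ a : ℝ, 0 < a → ∀ x, Φ (a • x) = a * Φ x) (hsub : ∀ x y, Φ (x + y) ≤ Φ x + Φ y)
    (x u : E) {a b : ℝ} (hab : a ≤ b) :
    Φ (x + b • u) ≤ Φ (x + a • u) + (b - a) * Φ u := by
  rcases hab.eq_or_lt with rfl | hlt
  · simp
  have hsplit : x + b • u = (x + a • u) + (b - a) • u := by
    rw [add_assoc, ← add_smul, add_sub_cancel]
  calc Φ (x + b • u) ≤ Φ (x + a • u) + Φ ((b - a) • u) := hsplit ▸ hsub _ _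
    _ = Φ (x + a • u) + (b - a) * Φ u := by rw [hhom _ (sub_pos.2 hlt)]

theorem integral_sublinear_add_smul_sub_le {E : Type*} [AddCommGroup E] [Module ℝ E]
    [MeasurableSpace E] {μ : Measure E} {Φ : E → ℝ}
    (hhom : ∀ a : ℝ, 0 < a → ∀ x, Φ (a • x) = a * Φ x) (hsub : ∀ x y, Φ (x + y) ≤ Φ x + Φ y)
    (x : E) {a b : ℝ} (hab : a ≤ b) (hΦ : Integrable Φ μ)
    (ha : Integrable (fun u => Φ (x + a • u)) μ) (hb : Integrable (fun u => Φ (x + b • u)) μ) :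
    (∫ u, Φ (x + b • u) ∂μ) - ∫ u, Φ (x + a • u) ∂μ ≤ (b - a) * ∫ u, Φ u ∂μ := by
  have hmono := integral_mono (g := fun u => Φ (x + a • u) + (b - a) * Φ u) hb
    (ha.add (hΦ.const_mul (b - a)))
    fun u => sublinear_add_smul_le hhom hsub x u hab
  rw [integral_add ha (hΦ.const_mul _), integral_const_mul] at hmono
  linarith

theorem overestimation_penalty_time_varying_general {N : ℕ} (T : ℕ)
    (Φ : EuclideanSpace ℝ (Fin N) → ℝ)
    (hhom : ∀ a : ℝ, 0 < a → ∀ x, Φ (a • x) = a * Φ x)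
    (hsub : ∀ x y, Φ (x + y) ≤ Φ x + Φ y)
    (μ : Measure (EuclideanSpace ℝ (Fin N)))
    (hint : ∀ (x : EuclideanSpace ℝ (Fin N)) (c : ℝ), 0 ≤ c →
      Integrable (fun u => Φ (x + c • u)) μ)
    (η : ℕ → ℝ) (hη0 : η 0 = 0) (hηmono : Monotone η)
    (Θ : ℕ → EuclideanSpace ℝ (Fin N)) :
    ∑ t ∈ Finset.Icc 1 T,
        ((∫ u, Φ (Θ (t - 1) + η t • u) ∂μ) - ∫ u, Φ (Θ (t - 1) + η (t - 1) • u) ∂μ) ≤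
      η T * ∫ u, Φ u ∂μ := by
  have hΦ : Integrable Φ μ := by simpa using hint 0 1 zero_le_one
  have hη : ∀ t, 0 ≤ η t := fun t => hη0 ▸ hηmono (Nat.zero_le t)
  calc _ ≤ ∑ t ∈ Finset.Icc 1 T, (η t - η (t - 1)) * ∫ u, Φ u ∂μ :=
        Finset.sum_le_sum fun t _ => integral_sublinear_add_smul_sub_le hhom hsub _
          (hηmono (Nat.sub_le t 1)) hΦ (hint _ _ (hη _)) (hint _ _ (hη _))
    _ = η T * ∫ u, Φ u ∂μ := by
        rw [← Finset.sum_mul, Finset.sum_Icc_one_sub_pred, hη0, sub_zero]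

/-- Lemma 7 of the paper: for a sublinear potential and nondecreasing scaling
parameters with `η 0 = 0`, the overestimation penalty of stochastic smoothing
telescopes to at most `η T ∫ Φ(u) dμ(u)`. -/
theorem overestimation_penalty_time_varying {N : ℕ} (T : ℕ)
    (Φ : EuclideanSpace ℝ (Fin N) → ℝ) (hmeas : Measurable Φ)
    (hhom : ∀ a : ℝ, 0 < a → ∀ x, Φ (a • x) = a * Φ x)
    (hsub : ∀ x y, Φ (x + y) ≤ Φ x + Φ y)
    (μ : Measure (EuclideanSpace ℝ (Fin N))) [IsProbabilityMeasure μ]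
    (hint : ∀ (x : EuclideanSpace ℝ (Fin N)) (c : ℝ), 0 ≤ c →
      Integrable (fun u => Φ (x + c • u)) μ)
    (η : ℕ → ℝ) (hη0 : η 0 = 0) (hηnn : ∀ t, 0 ≤ η t) (hηmono : Monotone η)
    (Θ : ℕ → EuclideanSpace ℝ (Fin N)) :
    ∑ t ∈ Finset.Icc 1 T,
        ((∫ u, Φ (Θ (t - 1) + η t • u) ∂μ) - ∫ u, Φ (Θ (t - 1) + η (t - 1) • u) ∂μ) ≤
      η T * ∫ u, Φ u ∂μ :=
  overestimation_penalty_time_varying_general T Φ hhom hsub μ hint η hη0 hηmono Θ
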